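/- There is no d-regular bipartite graph with d ≥ 3, diameter 5, girth 8, and order M^b(d,5) − 4 = 2(1 + (d-1) + (d-1)² + (d-1)³ + (d-1)⁴) − 4 in which every vertex lies on exactly two 8-cycles, because 4 does not divide M^b(d,5) − 4 appropriately: specifically, the count (M^b(d,5) − 4)/4 of 8-cycles fails to be an even integer. -/

import Mathlib

/-!
Double counting the pairs (vertex, 8-cycle through it) gives `2 |V| = 8 N`, where `N` is the number
of 8-cycles, so `|V| ≡ 0 (mod 4)`. But `|V| = 2 s - 4` with `s = 1 + k + k² + k³ + k⁴`
(`k = d - 1`) odd, so `|V| ≡ 2 (mod 4)`.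
-/

/-- The set of edge sets of cycles of length `L` through the vertex `v`. -/
def cyclesThrough {V : Type*} [DecidableEq V] (G : SimpleGraph V) (L : ℕ)
    (v : V) : Set (Finset (Sym2 V)) :=
  {E | ∃ w : G.Walk v v, w.IsCycle ∧ w.length = L ∧ w.edges.toFinset = E}

theorem Nat.odd_geom_sum {n : ℕ} (k : ℕ) (hn : Odd n) : Odd (∑ i ∈ Finset.range n, k ^ i) := by
  obtain ⟨m, rfl⟩ := hn
  induction m with
  | zero => simp
  | succ m ih =>
    have hpair : Even (k ^ (2 * m + 1) + k ^ (2 * m + 2)) := by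
      rw [show k ^ (2 * m + 1) + k ^ (2 * m + 2) = k ^ (2 * m) * (k * (k + 1)) by ring]
      exact (Nat.even_mul_succ_self k).mul_left _
    rw [show 2 * (m + 1) + 1 = 2 * m + 1 + 1 + 1 by ring, Finset.sum_range_succ,
      Finset.sum_range_succ, add_assoc]
    exact ih.add_even hpair

namespace SimpleGraph.Walk

variable {V : Type*} {G : SimpleGraph V} {v : V}

theorem IsCycle.card_support_toFinset [DecidableEq V] {w : G.Walk v v} (hw : w.IsCycle) :
    w.support.toFinset.card = w.length := by
  have hsupp : w.support.toFinset = w.support.tail.toFinset := by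
    rw [← w.cons_tail_support, List.toFinset_cons, List.tail_cons,
      Finset.insert_eq_of_mem (List.mem_toFinset.2 (w.end_mem_tail_support hw.not_nil))]
  rw [hsupp, List.toFinset_card_of_nodup hw.support_nodup, List.length_tail, length_support,
    Nat.add_sub_cancel]

theorem IsCycle.edges_toFinset_mem_cyclesThrough_iff [DecidableEq V] {w : G.Walk v v}
    (hw : w.IsCycle) {u : V} :
    w.edges.toFinset ∈ cyclesThrough G w.length u ↔ u ∈ w.support := by
  constructor
  · rintro ⟨w', hw', -, hedges⟩
    obtain ⟨e, he, hue⟩ :=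
      (mem_support_iff_exists_mem_edges_of_not_nil hw'.not_nil).1 w'.start_mem_support
    have he' : e ∈ w.edges := List.mem_toFinset.1 (hedges ▸ List.mem_toFinset.2 he)
    exact (mem_support_iff_exists_mem_edges_of_not_nil hw.not_nil).2 ⟨e, he', hue⟩
  · intro hu
    refine ⟨w.rotate u hu, hw.rotate hu, length_rotate .., ?_⟩
    ext e
    simp [(w.rotate_edges u hu).perm.mem_iff]

end SimpleGraph.Walk

theorem card_mul_eq_mul_ncard_iUnion_cyclesThrough {V : Type*} [Fintype V] [DecidableEq V]
    (G : SimpleGraph V) {L r : ℕ} (h : ∀ v, (cyclesThrough G L v).ncard = r) :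
    Fintype.card V * r = L * (⋃ v, cyclesThrough G L v).ncard := by
  classical
  set cycles := (Set.toFinite (⋃ v, cyclesThrough G L v)).toFinset
  have hdouble := Finset.card_mul_eq_card_mul (s := Finset.univ) (t := cycles)
    (fun v E => E ∈ cyclesThrough G L v) (m := r) (n := L) ?_ ?_
  · rw [← Finset.card_univ, hdouble, mul_comm, Set.ncard_eq_toFinset_card _ (Set.toFinite _)]
  · intro v _
    rw [← h v, ← Set.ncard_coe_finset, Finset.bipartiteAbove, Finset.coe_filter]
    congr 1
    ext E
    simpa [cycles] using fun hE => ⟨v, hE⟩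
  · intro E hE
    obtain ⟨v, w, hw, rfl, rfl⟩ := Set.mem_iUnion.1 ((Set.Finite.mem_toFinset _).1 hE)
    have hbelow : Finset.univ.filter (fun u => w.edges.toFinset ∈ cyclesThrough G w.length u) =
        w.support.toFinset := by
      ext u
      simp [hw.edges_toFinset_mem_cyclesThrough_iff]
    rw [Finset.bipartiteBelow, hbelow, hw.card_support_toFinset]

/-- There is no `d`-regular bipartite graph with `d ≥ 3`, diameter 5, girth 8,
order `M^b(d,5) − 4` in which every vertex lies on exactly two 8-cycles. -/
theorem stmt14 (d : ℕ) (hd : 3 ≤ d) :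
    ∀ (V : Type*) [Fintype V] [DecidableEq V] (G : SimpleGraph V)
      [DecidableRel G.Adj] (c : V → Bool),
      (∀ u v, G.Adj u v → c u ≠ c v) →
      G.IsRegularOfDegree d → G.diam = 5 → G.girth = (8 : ℕ) →
      Fintype.card V = 2 * ∑ i ∈ Finset.range 5, (d - 1) ^ i - 4 →
      (∀ v : V, (cyclesThrough G 8 v).ncard = 2) → False := by
  intro V _ _ G _ _ _ _ _ _ hcard hcyc
  have hcount := card_mul_eq_mul_ncard_iUnion_cyclesThrough G hcyc
  obtain ⟨m, hm⟩ := Nat.odd_geom_sum (d - 1) (by decide : Odd 5)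
  -- rules out the truncated value `2 * 1 - 4 = 0`
  have hlarge : d - 1 ≤ ∑ i ∈ Finset.range 5, (d - 1) ^ i := by
    simpa using Finset.single_le_sum (f := fun i => (d - 1) ^ i) (fun _ _ => Nat.zero_le _)
      (show 1 ∈ Finset.range 5 by simp)
  rw [hcard] at hcount
  omega
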